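/- arXiv:1909.09178 — 5 statements merged into one kernel-verified Lean document; each statement's English description precedes it below -/
import Mathlib

section
/- Let k ≥ 2 and n ≥ 2 be integers. For every k-edge-colouring of the complete graph K_n on n vertices, there exists a monochromatic component whose order m satisfies (k-1)·m ≥ n. -/
open SimpleGraph

/-- The colour-`i` subgraph of the graph `G` under the edge-colouring `c`. -/
def colourSub {V : Type*} {k : ℕ} (G : SimpleGraph V) (c : Sym2 V → Fin k) (i : Fin k) :
    SimpleGraph V where
  Adj u v := G.Adj u v ∧ c s(u, v) = i
  symm := by
    constructor
    intro u v h
    exact ⟨h.1.symm, by rw [Sym2.eq_swap]; exact h.2⟩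
  loopless := by
    constructor
    intro u h
    exact G.irrefl h.1

/-- `K` is a monochromatic component of colour `i`: a connected component of the colour-`i`
subgraph of `G` that contains at least one edge. Its order is `K.supp.ncard`. -/
def IsMonoComp {V : Type*} {k : ℕ} (G : SimpleGraph V) (c : Sym2 V → Fin k) (i : Fin k)
    (K : (colourSub G c i).ConnectedComponent) : Prop :=
  ∃ u v, (colourSub G c i).Adj u v ∧ (colourSub G c i).connectedComponentMk u = K

/-- The minimum degree of a finite simple graph (classical version). -/
noncomputable def minDeg {V : Type*} [Fintype V] (G : SimpleGraph V) : ℕ :=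
  @SimpleGraph.minDegree V G _ (Classical.decRel _)

section MilneAux
open Finset

noncomputable def hm (x y : ℚ) : ℚ := if x + y = 0 then 0 else x * y / (x + y)

lemma hm_nonneg {x y : ℚ} (hx : 0 ≤ x) (hy : 0 ≤ y) : 0 ≤ hm x y := by
  unfold hm; split
  · exact le_refl 0
  · positivity

lemma hm_mono {x y a b : ℚ} (hx : 0 ≤ x) (hy : 0 ≤ y) (hxa : x ≤ a) (hyb : y ≤ b) :
    hm x y ≤ hm a b := by
  have ha : 0 ≤ a := hx.trans hxa
  have hb : 0 ≤ b := hy.trans hyb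
  unfold hm
  by_cases h1 : x + y = 0
  · rw [if_pos h1]
    split
    · exact le_refl 0
    · positivity
  · have hxy : 0 < x + y := lt_of_le_of_ne (by positivity) (Ne.symm h1)
    have hab : 0 < a + b := lt_of_lt_of_le hxy (add_le_add hxa hyb)
    rw [if_neg h1, if_neg (ne_of_gt hab)]
    rw [div_le_div_iff₀ hxy hab]
    have h1' : x * y ≤ x * b := mul_le_mul_of_nonneg_left hyb hx
    have h2' : x * y ≤ a * y := mul_le_mul_of_nonneg_right hxa hy
    nlinarith [mul_le_mul_of_nonneg_right h1' ha, mul_le_mul_of_nonneg_right h2' hb]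

lemma hm_superadd {x1 y1 x2 y2 : ℚ} (hx1 : 0 ≤ x1) (hy1 : 0 ≤ y1) (hx2 : 0 ≤ x2)
    (hy2 : 0 ≤ y2) : hm x1 y1 + hm x2 y2 ≤ hm (x1 + x2) (y1 + y2) := by
  by_cases h1 : x1 + y1 = 0
  · have hx : x1 = 0 := by linarith
    have hy : y1 = 0 := by linarith
    rw [hx, hy]
    have : hm 0 0 = 0 := by unfold hm; simp
    rw [this, zero_add, zero_add, zero_add]
  · by_cases h2 : x2 + y2 = 0
    · have hx : x2 = 0 := by linarith
      have hy : y2 = 0 := by linarith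
      rw [hx, hy]
      have : hm 0 0 = 0 := by unfold hm; simp
      rw [this, add_zero, add_zero, add_zero]
    · have hp1 : 0 < x1 + y1 := lt_of_le_of_ne (by positivity) (Ne.symm h1)
      have hp2 : 0 < x2 + y2 := lt_of_le_of_ne (by positivity) (Ne.symm h2)
      have hp : 0 < x1 + x2 + (y1 + y2) := by linarith
      unfold hm
      rw [if_neg h1, if_neg h2, if_neg (ne_of_gt hp)]
      rw [div_add_div _ _ (ne_of_gt hp1) (ne_of_gt hp2), div_le_div_iff₀ (by positivity) hp]
      nlinarith [sq_nonneg (x1 * y2 - x2 * y1), mul_pos hp1 hp2]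

lemma hm_sum {α : Type*} (s : Finset α) (x y : α → ℚ) (hx : ∀ j ∈ s, 0 ≤ x j)
    (hy : ∀ j ∈ s, 0 ≤ y j) :
    ∑ j ∈ s, hm (x j) (y j) ≤ hm (∑ j ∈ s, x j) (∑ j ∈ s, y j) := by
  induction s using Finset.cons_induction with
  | empty => simp [hm]
  | cons a s ha ih =>
    rw [sum_cons, sum_cons, sum_cons]
    have h1 := ih (fun j hj => hx j (mem_cons.2 (Or.inr hj)))
      (fun j hj => hy j (mem_cons.2 (Or.inr hj)))
    have hxs : 0 ≤ ∑ j ∈ s, x j := sum_nonneg fun j hj => hx j (mem_cons.2 (Or.inr hj))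
    have hys : 0 ≤ ∑ j ∈ s, y j := sum_nonneg fun j hj => hy j (mem_cons.2 (Or.inr hj))
    calc hm (x a) (y a) + ∑ j ∈ s, hm (x j) (y j)
        ≤ hm (x a) (y a) + hm (∑ j ∈ s, x j) (∑ j ∈ s, y j) := by linarith
      _ ≤ hm (x a + ∑ j ∈ s, x j) (y a + ∑ j ∈ s, y j) :=
          hm_superadd (hx a (mem_cons_self a s)) (hy a (mem_cons_self a s)) hxs hys

/-- Milne-type inequality in ℕ. -/
lemma milne_nat {α : Type*} (s : Finset α) (x y : α → ℕ) (M a b : ℕ)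
    (hx : ∑ j ∈ s, x j ≤ a) (hy : ∑ j ∈ s, y j ≤ b)
    (hM : ∀ j ∈ s, x j * y j ≠ 0 → x j + y j ≤ M) :
    (a + b) * ∑ j ∈ s, x j * y j ≤ M * (a * b) := by
  by_cases hab : a + b = 0
  · rw [hab, zero_mul]; exact Nat.zero_le _
  have key : (↑(∑ j ∈ s, x j * y j) : ℚ) ≤ (M : ℚ) * hm a b := by
    push_cast
    calc (∑ j ∈ s, (x j : ℚ) * (y j : ℚ))
        ≤ ∑ j ∈ s, (M : ℚ) * hm (x j) (y j) := by
          apply sum_le_sum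
          intro j hj
          by_cases h0 : x j * y j = 0
          · have hz : (x j : ℚ) * (y j : ℚ) = ((x j * y j : ℕ) : ℚ) := by push_cast; ring
            rw [hz, h0, Nat.cast_zero]
            exact mul_nonneg (by positivity) (hm_nonneg (by positivity) (by positivity))
          · have hsum : (0:ℚ) < (x j : ℚ) + (y j : ℚ) := by
              have h5 : 0 < x j + y j := by
                rcases Nat.eq_zero_or_pos (x j + y j) with h | h
                · exfalso; apply h0
                  have : x j = 0 := by omega
                  simp [this]
                · exact h
              exact_mod_cast h5
            have heq : hm (x j) (y j) = (x j : ℚ) * (y j) / ((x j : ℚ) + y j) := by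
              unfold hm; rw [if_neg (ne_of_gt hsum)]
            rw [heq, mul_div_assoc', le_div_iff₀ hsum]
            have hMj : ((x j : ℚ) + y j) ≤ (M : ℚ) := by exact_mod_cast hM j hj h0
            nlinarith [mul_nonneg (Nat.cast_nonneg (x j) (α := ℚ)) (Nat.cast_nonneg (y j) (α := ℚ))]
      _ = (M : ℚ) * ∑ j ∈ s, hm (x j) (y j) := by rw [mul_sum]
      _ ≤ (M : ℚ) * hm (∑ j ∈ s, (x j : ℚ)) (∑ j ∈ s, (y j : ℚ)) := by
          apply mul_le_mul_of_nonneg_left _ (by positivity)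
          exact hm_sum s _ _ (fun j _ => by positivity) (fun j _ => by positivity)
      _ ≤ (M : ℚ) * hm a b := by
          apply mul_le_mul_of_nonneg_left _ (by positivity)
          apply hm_mono (by positivity) (by positivity)
          · exact_mod_cast hx
          · exact_mod_cast hy
  have habq : (0:ℚ) < (a : ℚ) + b := by
    have : 0 < a + b := Nat.pos_of_ne_zero hab
    exact_mod_cast this
  have hmab : hm a b = (a : ℚ) * b / ((a:ℚ) + b) := by
    unfold hm; rw [if_neg (ne_of_gt habq)]
  rw [hmab] at key
  have h2 : ((a:ℚ) + b) * ((M:ℚ) * ((a:ℚ) * b / ((a:ℚ) + b))) = (M:ℚ) * ((a:ℚ) * b) := by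
    field_simp
  have h3 : ((a:ℚ) + b) * (↑(∑ j ∈ s, x j * y j)) ≤ (M:ℚ) * ((a:ℚ) * b) :=
    le_of_le_of_eq (mul_le_mul_of_nonneg_left key habq.le) h2
  exact_mod_cast h3

lemma exists_adj_of_mk_eq {V : Type*} {G : SimpleGraph V} {u v : V} (hne : u ≠ v)
    (h : G.connectedComponentMk u = G.connectedComponentMk v) : ∃ w, G.Adj u w := by
  obtain ⟨p⟩ := (SimpleGraph.ConnectedComponent.eq).mp h
  cases p with
  | nil => exact absurd rfl hne
  | cons hadj _ => exact ⟨_, hadj⟩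

end MilneAux

open Finset in
/-- For every k-edge-colouring of the complete graph on n vertices (k ≥ 2, n ≥ 2), there is a
monochromatic component whose order m satisfies (k-1)·m ≥ n. -/
theorem stmt_0 (k n : ℕ) (hk : 2 ≤ k) (hn : 2 ≤ n)
    (c : Sym2 (Fin n) → Fin k) :
    ∃ (i : Fin k) (K : (colourSub (⊤ : SimpleGraph (Fin n)) c i).ConnectedComponent),
      IsMonoComp ⊤ c i K ∧ n ≤ (k - 1) * K.supp.ncard := by
  classical
  set φ : ∀ i : Fin k, Fin n → (colourSub (⊤ : SimpleGraph (Fin n)) c i).ConnectedComponent :=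
    fun i v => (colourSub (⊤ : SimpleGraph (Fin n)) c i).connectedComponentMk v with hφ
  -- supp ncard as a filter card
  have hsupp : ∀ (i : Fin k) (C : (colourSub (⊤ : SimpleGraph (Fin n)) c i).ConnectedComponent),
      C.supp.ncard = (Finset.univ.filter (fun v => φ i v = C)).card := by
    intro i C
    rw [show C.supp = ↑(Finset.univ.filter (fun v => φ i v = C)) by
      ext v
      simp [SimpleGraph.ConnectedComponent.mem_supp_iff, hφ]]
    rw [Set.ncard_coe_finset]
  have v0 : Fin n := ⟨0, by omega⟩
  set i₀ : Fin k := ⟨0, by omega⟩ with hi₀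
  by_cases hconn : ∀ v w : Fin n, φ i₀ v = φ i₀ w
  · -- colour i₀ graph is connected: component of order n
    refine ⟨i₀, φ i₀ ⟨0, by omega⟩, ?_, ?_⟩
    · obtain ⟨w, hadj⟩ := exists_adj_of_mk_eq
        (show (⟨0, by omega⟩ : Fin n) ≠ ⟨1, by omega⟩ by simp)
        (hconn ⟨0, by omega⟩ ⟨1, by omega⟩)
      exact ⟨_, w, hadj, rfl⟩
    · have hs : (φ i₀ ⟨0, by omega⟩).supp = Set.univ := by
        ext v
        simp only [SimpleGraph.ConnectedComponent.mem_supp_iff, Set.mem_univ, iff_true]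
        exact hconn v ⟨0, by omega⟩
      rw [hs, Set.ncard_univ, Nat.card_eq_fintype_card, Fintype.card_fin]
      exact Nat.le_mul_of_pos_left n (by omega)
  · push_neg at hconn
    obtain ⟨v, w, hvw⟩ := hconn
    set A : Finset (Fin n) := Finset.univ.filter (fun u => φ i₀ u = φ i₀ v) with hA
    set B : Finset (Fin n) := Finset.univ.filter (fun u => ¬(φ i₀ u = φ i₀ v)) with hB
    have hvA : v ∈ A := by simp [hA]
    have hwB : w ∈ B := by simp [hB]; exact fun h => hvw h.symm
    set a := A.card with ha'
    set b := B.card with hb'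
    have hab : a + b = n := by
      rw [ha', hb', hA, hB, Finset.card_filter_add_card_filter_not, Finset.card_univ,
        Fintype.card_fin]
    have hapos : 0 < a := Finset.card_pos.2 ⟨v, hvA⟩
    have hbpos : 0 < b := Finset.card_pos.2 ⟨w, hwB⟩
    -- components present, per colour
    set t : ∀ i : Fin k, Finset ((colourSub (⊤ : SimpleGraph (Fin n)) c i).ConnectedComponent) :=
      fun i => Finset.univ.image (φ i) with ht
    set x := fun (i : Fin k) C => ((A.filter (fun u => φ i u = C)).card) with hx
    set y := fun (i : Fin k) C => ((B.filter (fun u => φ i u = C)).card) with hy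
    -- the key adjacency fact
    have hadj : ∀ (i : Fin k) (p q : Fin n), p ∈ A → q ∈ B → c s(p, q) = i → φ i p = φ i q := by
      intro i p q hp hq hc
      have hpq : p ≠ q := by
        rintro rfl
        rw [hA, Finset.mem_filter] at hp
        rw [hB, Finset.mem_filter] at hq
        exact hq.2 hp.2
      have : (colourSub (⊤ : SimpleGraph (Fin n)) c i).Adj p q :=
        ⟨(SimpleGraph.top_adj p q).2 hpq, hc⟩
      exact SimpleGraph.ConnectedComponent.connectedComponentMk_eq_of_adj this
    -- sums of x, y
    have hxsum : ∀ i : Fin k, ∑ C ∈ t i, x i C = a := by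
      intro i
      rw [ha', hx, ht]
      exact (Finset.card_eq_sum_card_fiberwise
        (fun u _ => Finset.mem_image_of_mem (φ i) (Finset.mem_univ u))).symm
    have hysum : ∀ i : Fin k, ∑ C ∈ t i, y i C = b := by
      intro i
      rw [hb', hy, ht]
      exact (Finset.card_eq_sum_card_fiberwise
        (fun u _ => Finset.mem_image_of_mem (φ i) (Finset.mem_univ u))).symm
    -- covering
    set Q : Fin k → Finset (Fin n × Fin n) :=
      fun i => (A ×ˢ B).filter (fun p => c s(p.1, p.2) = i) with hQ
    have hQ0 : Q i₀ = ∅ := by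
      rw [hQ]
      rw [Finset.filter_eq_empty_iff]
      rintro ⟨p, q⟩ hpq
      rw [Finset.mem_product] at hpq
      intro hc
      have hpA := hpq.1
      have hqB := hpq.2
      have heq := hadj i₀ p q hpA hqB hc
      rw [hA, Finset.mem_filter] at hpA
      rw [hB, Finset.mem_filter] at hqB
      exact hqB.2 (heq.symm.trans hpA.2)
    have hcover : a * b ≤ ∑ i ∈ Finset.univ.erase i₀, ∑ C ∈ t i, x i C * y i C := by
      have h1 : a * b = (A ×ˢ B).card := by rw [Finset.card_product]
      have h2 : (A ×ˢ B).card = ∑ i ∈ (Finset.univ : Finset (Fin k)), (Q i).card :=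
        Finset.card_eq_sum_card_fiberwise (fun p _ => Finset.mem_univ _)
      have h3 : ∑ i ∈ (Finset.univ : Finset (Fin k)), (Q i).card
          = ∑ i ∈ Finset.univ.erase i₀, (Q i).card := by
        refine (Finset.sum_erase _ ?_).symm
        rw [hQ0, Finset.card_empty]
      rw [h1, h2, h3]
      apply Finset.sum_le_sum
      intro i _
      have h4 : (Q i).card = ∑ C ∈ t i, ((Q i).filter (fun p => φ i p.1 = C)).card :=
        Finset.card_eq_sum_card_fiberwise
          (fun p _ => Finset.mem_image_of_mem (φ i) (Finset.mem_univ p.1))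
      rw [h4]
      apply Finset.sum_le_sum
      intro C _
      have h5 : x i C * y i C
          = ((A.filter (fun u => φ i u = C)) ×ˢ (B.filter (fun u => φ i u = C))).card := by
        rw [Finset.card_product]
      rw [h5]
      apply Finset.card_le_card
      rintro ⟨p, q⟩ hp
      simp only [hQ, Finset.mem_filter, Finset.mem_product] at hp
      obtain ⟨⟨⟨hpA, hqB⟩, hcpq⟩, hφp⟩ := hp
      have heq := hadj i p q hpA hqB hcpq
      simp only [Finset.mem_product, Finset.mem_filter]
      exact ⟨⟨hpA, hφp⟩, ⟨hqB, heq.symm.trans hφp⟩⟩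
    -- the maximum order among relevant components
    set M : ℕ := (Finset.univ.erase i₀).sup (fun i => (t i).sup
      (fun C => if x i C * y i C = 0 then 0 else x i C + y i C)) with hM
    have hMil : ∀ i ∈ Finset.univ.erase i₀,
        (a + b) * ∑ C ∈ t i, x i C * y i C ≤ M * (a * b) := by
      intro i hi
      apply milne_nat (t i) (x i) (y i) M a b (le_of_eq (hxsum i)) (le_of_eq (hysum i))
      intro C hC h0
      calc x i C + y i C
          = (if x i C * y i C = 0 then 0 else x i C + y i C) := by rw [if_neg h0]
        _ ≤ (t i).sup (fun C => if x i C * y i C = 0 then 0 else x i C + y i C) :=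
            Finset.le_sup (f := fun C => if x i C * y i C = 0 then 0 else x i C + y i C) hC
        _ ≤ M := by
            rw [hM]
            exact Finset.le_sup (f := fun i => (t i).sup
              (fun C => if x i C * y i C = 0 then 0 else x i C + y i C)) hi
    have hcard : (Finset.univ.erase i₀).card = k - 1 := by
      rw [Finset.card_erase_of_mem (Finset.mem_univ i₀), Finset.card_univ, Fintype.card_fin]
    have hchain : n * (a * b) ≤ ((k - 1) * M) * (a * b) := by
      calc n * (a * b) = (a + b) * (a * b) := by rw [hab]
        _ ≤ (a + b) * ∑ i ∈ Finset.univ.erase i₀, ∑ C ∈ t i, x i C * y i C :=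
            Nat.mul_le_mul_left _ hcover
        _ = ∑ i ∈ Finset.univ.erase i₀, (a + b) * ∑ C ∈ t i, x i C * y i C := by
            rw [Finset.mul_sum]
        _ ≤ ∑ i ∈ Finset.univ.erase i₀, M * (a * b) := Finset.sum_le_sum hMil
        _ = (k - 1) * (M * (a * b)) := by rw [Finset.sum_const, hcard, smul_eq_mul]
        _ = ((k - 1) * M) * (a * b) := by ring
    have hnM : n ≤ (k - 1) * M :=
      Nat.le_of_mul_le_mul_right hchain (Nat.mul_pos hapos hbpos)
    have hMpos : 0 < M := by
      rcases Nat.eq_zero_or_pos M with h | h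
      · rw [h, Nat.mul_zero] at hnM; omega
      · exact h
    -- extract the witness component
    have hne : (Finset.univ.erase i₀).Nonempty := by
      rw [← Finset.card_pos, hcard]; omega
    obtain ⟨i, hi, hMi⟩ := Finset.exists_mem_eq_sup (Finset.univ.erase i₀) hne
      (fun i => (t i).sup (fun C => if x i C * y i C = 0 then 0 else x i C + y i C))
    have htne : (t i).Nonempty := ⟨φ i v, Finset.mem_image_of_mem (φ i) (Finset.mem_univ v)⟩
    obtain ⟨C, hC, hMC⟩ := Finset.exists_mem_eq_sup (t i) htne
      (fun C => if x i C * y i C = 0 then 0 else x i C + y i C)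
    rw [hM, hMi, hMC] at hMpos
    rw [hM, hMi, hMC] at hnM
    have h0 : ¬ (x i C * y i C = 0) := by
      intro h
      rw [if_pos h] at hMpos
      omega
    rw [if_neg h0] at hnM
    have hx0 : x i C ≠ 0 := fun h => h0 (by rw [h, Nat.zero_mul])
    have hy0 : y i C ≠ 0 := fun h => h0 (by rw [h, Nat.mul_zero])
    obtain ⟨u, hu⟩ := Finset.card_pos.1 (Nat.pos_of_ne_zero hx0)
    obtain ⟨u', hu'⟩ := Finset.card_pos.1 (Nat.pos_of_ne_zero hy0)
    rw [Finset.mem_filter] at hu hu'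
    have huu' : u ≠ u' := by
      rintro rfl
      rw [hA, Finset.mem_filter] at hu
      rw [hB, Finset.mem_filter] at hu'
      exact hu'.1.2 hu.1.2
    refine ⟨i, C, ?_, ?_⟩
    · obtain ⟨z, hz⟩ := exists_adj_of_mk_eq huu' (hu.2.trans hu'.2.symm)
      exact ⟨u, z, hz, hu.2⟩
    · refine le_trans hnM (Nat.mul_le_mul_left _ ?_)
      rw [hsupp i C]
      have hdisj : Disjoint (A.filter (fun u => φ i u = C)) (B.filter (fun u => φ i u = C)) := by
        apply Finset.disjoint_filter_filter
        rw [hA, hB]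
        exact Finset.disjoint_filter_filter_not Finset.univ Finset.univ _
      calc x i C + y i C
          = ((A.filter (fun u => φ i u = C)) ∪ (B.filter (fun u => φ i u = C))).card :=
            (Finset.card_union_of_disjoint hdisj).symm
        _ ≤ (Finset.univ.filter (fun v => φ i v = C)).card := by
            apply Finset.card_le_card
            intro z hz
            simp only [Finset.mem_union, Finset.mem_filter] at hz
            rw [Finset.mem_filter]
            rcases hz with h | h
            · exact ⟨Finset.mem_univ z, h.2⟩
            · exact ⟨Finset.mem_univ z, h.2⟩
end

section
/- Let k ≥ 3 be an integer such that k-1 is a prime power, and let n ≥ 1 be divisible by (k-1)². Then there exists a k-edge-colouring of the complete graph K_n on n vertices such that every monochromatic component has order exactly n/(k-1). -/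
open SimpleGraph

section Aux

variable {F : Type*} [Field F] [DecidableEq F]

/-- The direction of a vector in `F²`: slope if the first coordinate is nonzero, `none` (∞)
otherwise (including the zero vector). -/
def dir' (w : F × F) : Option F := if w.1 = 0 then none else some (w.2 / w.1)

/-- Membership of `w` in the line through the origin with direction `d`. -/
def lmem : Option F → F × F → Prop
  | none, w => w.1 = 0
  | some d, w => w.2 = d * w.1

lemma dir'_neg (w : F × F) : dir' (-w) = dir' w := by
  simp only [dir', Prod.fst_neg, neg_eq_zero, Prod.snd_neg, neg_div_neg_eq]

lemma lmem_zero (d : Option F) : lmem d (0 : F × F) := by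
  cases d <;> simp [lmem]

lemma lmem_add {d : Option F} {w₁ w₂ : F × F} (h₁ : lmem d w₁) (h₂ : lmem d w₂) :
    lmem d (w₁ + w₂) := by
  cases d with
  | none => simp only [lmem, Prod.fst_add] at *; rw [h₁, h₂, add_zero]
  | some d => simp only [lmem, Prod.snd_add, Prod.fst_add] at *; rw [h₁, h₂]; ring

lemma lmem_of_dir' (w : F × F) : lmem (dir' w) w := by
  by_cases h : w.1 = 0
  · simp [dir', lmem, h]
  · simp [dir', lmem, h, div_mul_cancel₀]

lemma dir'_eq_none {w : F × F} (h : w.1 = 0) : dir' w = none := by simp [dir', h]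

lemma dir'_eq_some {d : F} {w : F × F} (h : w.2 = d * w.1) (hw : w.1 ≠ 0) :
    dir' w = some d := by
  simp [dir', hw, h, mul_div_cancel_right₀ d hw]

lemma ncard_line [Fintype F] (d : Option F) (a : F × F) :
    Nat.card {x : F × F | lmem d (x - a)} = Fintype.card F := by
  rw [← Nat.card_eq_fintype_card]
  cases d with
  | none =>
    have hs : {x : F × F | lmem none (x - a)} = Set.range (fun t : F => (a.1, t)) := by
      ext x
      simp only [Set.mem_setOf_eq, lmem, Prod.fst_sub, sub_eq_zero, Set.mem_range,
        Prod.ext_iff]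
      constructor
      · intro h; exact ⟨x.2, h.symm, rfl⟩
      · rintro ⟨t, h1, h2⟩; exact h1.symm
    rw [hs, Nat.card_range_of_injective (fun s t h => by simpa using (Prod.ext_iff.mp h).2)]
  | some d =>
    have hs : {x : F × F | lmem (some d) (x - a)} =
        Set.range (fun t : F => (a.1 + t, a.2 + d * t)) := by
      ext x
      simp only [Set.mem_setOf_eq, lmem, Prod.snd_sub, Prod.fst_sub, Set.mem_range,
        Prod.ext_iff]
      constructor
      · intro h
        exact ⟨x.1 - a.1, by ring, by rw [← h]; ring⟩
      · rintro ⟨t, h1, h2⟩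
        rw [← h1, ← h2]; ring
    rw [hs, Nat.card_range_of_injective
      (fun s t h => by simpa using (Prod.ext_iff.mp h).1)]

end Aux

/-- If k ≥ 3, k-1 is a prime power and (k-1)² ∣ n with n ≥ 1, then there is a k-edge-colouring
of the complete graph on n vertices in which every monochromatic component has order exactly
n/(k-1). -/
theorem stmt_1 (k n : ℕ) (hk : 3 ≤ k) (hpp : IsPrimePow (k - 1)) (hn : 1 ≤ n)
    (hdvd : (k - 1) ^ 2 ∣ n) :
    ∃ c : Sym2 (Fin n) → Fin k,
      ∀ (i : Fin k) (K : (colourSub (⊤ : SimpleGraph (Fin n)) c i).ConnectedComponent),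
        IsMonoComp ⊤ c i K → (k - 1) * K.supp.ncard = n := by
  classical
  obtain ⟨p, e, hp, he, hpe⟩ := hpp
  haveI : Fact p.Prime := ⟨Nat.prime_iff.mpr hp⟩
  set q := k - 1 with hq
  let F : Type := GaloisField p e
  haveI : Field F := inferInstanceAs (Field (GaloisField p e))
  haveI : Fintype F := Fintype.ofFinite F
  haveI : DecidableEq F := Classical.decEq F
  have hF : Fintype.card F = q := by
    rw [← Nat.card_eq_fintype_card]
    exact (GaloisField.card p e he.ne').trans hpe
  set m := n / q ^ 2 with hm
  have hnm : q ^ 2 * m = n := Nat.mul_div_cancel' hdvd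
  have hq2 : 2 ≤ q := by omega
  have hm1 : 1 ≤ m := by
    rcases Nat.eq_zero_or_pos m with h | h
    · rw [h, mul_zero] at hnm
      omega
    · exact h
  -- the basic equivalences
  have hcard1 : Fintype.card (Fin n) = Fintype.card ((F × F) × Fin m) := by
    simp only [Fintype.card_fin, Fintype.card_prod, hF]
    rw [← hnm]; ring
  have hcard2 : Fintype.card (Option F) = Fintype.card (Fin k) := by
    rw [Fintype.card_option, Fintype.card_fin, hF]
    omega
  let e₁ : Fin n ≃ (F × F) × Fin m := Fintype.equivOfCardEq hcard1
  let e₂ : Option F ≃ Fin k := Fintype.equivOfCardEq hcard2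
  let π : Fin n → F × F := fun v => (e₁ v).1
  -- the colouring
  have hsymm : ∀ u v : Fin n, e₂ (dir' (π u - π v)) = e₂ (dir' (π v - π u)) := by
    intro u v
    rw [show π v - π u = -(π u - π v) by ring, dir'_neg]
  refine ⟨Sym2.lift ⟨fun u v => e₂ (dir' (π u - π v)), hsymm⟩, ?_⟩
  set c : Sym2 (Fin n) → Fin k := Sym2.lift ⟨fun u v => e₂ (dir' (π u - π v)), hsymm⟩ with hc
  have hadj : ∀ (d : Option F) (v w : Fin n),
      (colourSub ⊤ c (e₂ d)).Adj v w ↔ v ≠ w ∧ dir' (π v - π w) = d := by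
    intro d v w
    show (⊤ : SimpleGraph (Fin n)).Adj v w ∧ c s(v, w) = e₂ d ↔ _
    rw [top_adj, hc, Sym2.lift_mk, EmbeddingLike.apply_eq_iff_eq]
  have hreach : ∀ (d : Option F) (v w : Fin n),
      (colourSub ⊤ c (e₂ d)).Reachable v w ↔ lmem d (π v - π w) := by
    intro d v w
    constructor
    · rintro ⟨wk⟩
      induction wk with
      | nil => simpa using lmem_zero d
      | @cons a b z h _ ih =>
        have h1 : lmem d (π a - π b) := by
          rw [← ((hadj d a b).mp h).2]; exact lmem_of_dir' _
        have := lmem_add h1 ih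
        rwa [show (π a - π b) + (π b - π z) = π a - π z by ring] at this
    · intro h
      rcases eq_or_ne v w with rfl | hvw
      · exact Reachable.refl _
      cases d with
      | none =>
        exact ((hadj none v w).mpr ⟨hvw, dir'_eq_none h⟩).reachable
      | some d =>
        by_cases hπ : (π v - π w).1 = 0
        · -- go through an intermediate vertex
          have hπvw : π v = π w := by
            have h2 : (π v - π w).2 = 0 := by
              have h3 : (π v - π w).2 = d * (π v - π w).1 := h
              rw [h3, hπ, mul_zero]
            exact sub_eq_zero.mp (Prod.ext hπ h2)
          set z := e₁.symm ((π v + (1, d), (e₁ v).2)) with hz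
          have hπz : π z = π v + (1, d) := by simp [π, hz, e₁.apply_symm_apply]
          have hvz : π v - π z = (-1, -d) := by
            rw [hπz]; ext <;> simp
          have hzw : π z - π w = (1, d) := by
            rw [hπz, ← hπvw]; ext <;> simp
          have hne1 : (π v - π z).1 ≠ 0 := by
            rw [hvz]; simpa using neg_ne_zero.mpr (one_ne_zero (α := F))
          have hne2 : (π z - π w).1 ≠ 0 := by
            rw [hzw]; exact one_ne_zero
          have h1 : (colourSub ⊤ c (e₂ (some d))).Adj v z := by
            refine (hadj _ _ _).mpr ⟨?_, dir'_eq_some ?_ hne1⟩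
            · intro hvz'
              apply hne1
              rw [hvz', sub_self]; rfl
            · rw [hvz]; simp
          have h2 : (colourSub ⊤ c (e₂ (some d))).Adj z w := by
            refine (hadj _ _ _).mpr ⟨?_, dir'_eq_some ?_ hne2⟩
            · intro hzw'
              apply hne2
              rw [hzw', sub_self]; rfl
            · rw [hzw]; simp
          exact h1.reachable.trans h2.reachable
        · exact ((hadj _ v w).mpr ⟨hvw, dir'_eq_some h hπ⟩).reachable
  intro i K _
  obtain ⟨d, rfl⟩ : ∃ d, i = e₂ d := ⟨e₂.symm i, (e₂.apply_symm_apply i).symm⟩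
  obtain ⟨u, rfl⟩ := K.exists_rep
  rw [show (Quot.mk (colourSub ⊤ c (e₂ d)).Reachable u :
      (colourSub ⊤ c (e₂ d)).ConnectedComponent) =
      (colourSub ⊤ c (e₂ d)).connectedComponentMk u from rfl]
  have hsupp : ((colourSub ⊤ c (e₂ d)).connectedComponentMk u).supp =
      e₁ ⁻¹' ({x : F × F | lmem d (x - π u)} ×ˢ (Set.univ : Set (Fin m))) := by
    ext v
    simp only [ConnectedComponent.mem_supp_iff, ConnectedComponent.eq, Set.mem_preimage,
      Set.mem_prod, Set.mem_setOf_eq, Set.mem_univ, and_true]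
    exact hreach d v u
  rw [hsupp, ← Nat.card_coe_set_eq,
    Nat.card_preimage_of_injective e₁.injective
      (by rw [Equiv.range_eq_univ]; exact Set.subset_univ _),
    Nat.card_congr (Equiv.Set.prod _ _), Nat.card_prod, Nat.card_congr (Equiv.Set.univ _),
    ncard_line, hF, Nat.card_eq_fintype_card, Fintype.card_fin]
  rw [← hnm]; ring
end

section
/- Let G be a simple graph on n vertices with minimum degree δ(G) satisfying 6·δ(G) ≥ 5n, and suppose the edges of G are 3-coloured. If there exists a vertex v of G and a colour c such that no edge incident to v has colour c (i.e., v is not incident to edges of all three colours), then there exists a monochromatic component whose order m satisfies 2m ≥ n. -/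
open SimpleGraph

lemma fin3_cover (i : Fin 3) :
    ∃ j k : Fin 3, j ≠ i ∧ k ≠ i ∧ j ≠ k ∧ ∀ m : Fin 3, m = i ∨ m = j ∨ m = k := by
  fin_cases i
  · exact ⟨1, 2, by decide⟩
  · exact ⟨0, 2, by decide⟩
  · exact ⟨0, 1, by decide⟩

lemma ncard_nbr {n : ℕ} (G : SimpleGraph (Fin n)) [DecidableRel G.Adj] (u : Fin n) :
    (G.neighborSet u).ncard = G.degree u := by
  rw [← Nat.card_coe_set_eq, Nat.card_eq_fintype_card]
  exact G.card_neighborSet_eq_degree u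

lemma count_nbrs {n : ℕ} (G : SimpleGraph (Fin n)) [DecidableRel G.Adj] (u : Fin n)
    (S : Set (Fin n)) (hu : u ∉ S) :
    S.ncard + G.degree u + 1 ≤ (S ∩ G.neighborSet u).ncard + n := by
  classical
  have h1 : (S ∩ G.neighborSet u).ncard + (S \ G.neighborSet u).ncard = S.ncard :=
    Set.ncard_inter_add_ncard_diff_eq_ncard S _
  have h2 : ((S \ G.neighborSet u) ∪ G.neighborSet u).ncard
      = (S \ G.neighborSet u).ncard + (G.neighborSet u).ncard :=
    Set.ncard_union_eq Set.disjoint_sdiff_left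
  have hmem : u ∉ (S \ G.neighborSet u) ∪ G.neighborSet u := by
    intro h
    rcases h with h | h
    · exact hu h.1
    · exact G.irrefl h
  have h3 : (insert u ((S \ G.neighborSet u) ∪ G.neighborSet u)).ncard
      = ((S \ G.neighborSet u) ∪ G.neighborSet u).ncard + 1 :=
    Set.ncard_insert_of_notMem hmem
  have h4 : (insert u ((S \ G.neighborSet u) ∪ G.neighborSet u)).ncard ≤ n := by
    have h := Set.ncard_le_ncard
      (Set.subset_univ (insert u ((S \ G.neighborSet u) ∪ G.neighborSet u))) Set.finite_univ
    simpa [Set.ncard_univ] using h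
  have h5 := ncard_nbr G u
  omega

/-- If 6·δ(G) ≥ 5n and in a 3-edge-colouring of G some vertex v is incident to no edge of some
colour i, then there is a monochromatic component of order m with 2m ≥ n. -/
theorem stmt_10 (n : ℕ) (G : SimpleGraph (Fin n)) (hδ : 5 * n ≤ 6 * minDeg G)
    (c : Sym2 (Fin n) → Fin 3) (v : Fin n) (i : Fin 3)
    (hv : ∀ u, G.Adj v u → c s(v, u) ≠ i) :
    ∃ (j : Fin 3) (K : (colourSub G c j).ConnectedComponent),
      IsMonoComp G c j K ∧ n ≤ 2 * K.supp.ncard := by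
  classical
  letI inst : DecidableRel G.Adj := Classical.decRel _
  haveI : Nonempty (Fin n) := ⟨v⟩
  have hmd : minDeg G = G.minDegree := rfl
  rw [hmd] at hδ
  set d := G.minDegree with hdd
  have hmle : ∀ u : Fin n, d ≤ G.degree u := fun u => G.minDegree_le_degree u
  have hdn : ∀ u : Fin n, G.degree u < n := by
    intro u
    have := G.degree_lt_card_verts u
    simpa using this
  have hn6 : 6 ≤ n := by have h1 := hmle v; have h2 := hdn v; omega
  obtain ⟨j, k, hji, hki, hjk, hcov⟩ := fin3_cover i
  set Gj := colourSub G c j with hGjdef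
  set Gk := colourSub G c k with hGkdef
  set Gi := colourSub G c i with hGidef
  set A := (Gj.connectedComponentMk v).supp with hAdef
  set B := (Gk.connectedComponentMk v).supp with hBdef
  have hmemA : ∀ x, x ∈ A ↔ Gj.connectedComponentMk x = Gj.connectedComponentMk v :=
    fun x => ConnectedComponent.mem_supp_iff _ _
  have hmemB : ∀ x, x ∈ B ↔ Gk.connectedComponentMk x = Gk.connectedComponentMk v :=
    fun x => ConnectedComponent.mem_supp_iff _ _
  have stepA : ∀ x y, x ∈ A → Gj.Adj x y → y ∈ A := by
    intro x y hx hxy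
    rw [hmemA] at hx ⊢
    rw [← hx]
    exact ConnectedComponent.sound hxy.symm.reachable
  have stepB : ∀ x y, x ∈ B → Gk.Adj x y → y ∈ B := by
    intro x y hx hxy
    rw [hmemB] at hx ⊢
    rw [← hx]
    exact ConnectedComponent.sound hxy.symm.reachable
  have hvA : v ∈ A := (hmemA v).2 rfl
  have hvB : v ∈ B := (hmemB v).2 rfl
  have hNsub : G.neighborSet v ⊆ A ∪ B := by
    intro u hu
    have hadj : G.Adj v u := hu
    rcases hcov (c s(v, u)) with h | h | h
    · exact absurd h (hv u hadj)
    · exact Or.inl (stepA v u hvA ⟨hadj, h⟩)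
    · exact Or.inr (stepB v u hvB ⟨hadj, h⟩)
  -- basic cardinality facts
  have hvN : v ∉ G.neighborSet v := fun h => G.irrefl h
  have hins : (insert v (G.neighborSet v)).ncard = G.degree v + 1 := by
    rw [Set.ncard_insert_of_notMem hvN, ncard_nbr]
  have hinsub : insert v (G.neighborSet v) ⊆ A ∪ B := by
    intro x hx
    rcases hx with hx | hx
    · exact Or.inl (hx ▸ hvA)
    · exact hNsub hx
  have h1 : d + 1 ≤ (A \ B).ncard + B.ncard := by
    have e1 : (insert v (G.neighborSet v)).ncard ≤ (A ∪ B).ncard :=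
      Set.ncard_le_ncard hinsub (Set.toFinite _)
    have e2 : (A ∪ B).ncard ≤ ((A \ B) ∪ B).ncard := by
      apply Set.ncard_le_ncard _ (Set.toFinite _)
      intro x hx
      by_cases hxB : x ∈ B
      · exact Or.inr hxB
      · rcases hx with hx | hx
        · exact Or.inl ⟨hx, hxB⟩
        · exact absurd hx hxB
    have e3 : ((A \ B) ∪ B).ncard ≤ (A \ B).ncard + B.ncard := Set.ncard_union_le _ _
    have e4 := hmle v
    omega
  have h2 : d + 1 ≤ (B \ A).ncard + A.ncard := by
    have e1 : (insert v (G.neighborSet v)).ncard ≤ (A ∪ B).ncard :=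
      Set.ncard_le_ncard hinsub (Set.toFinite _)
    have e2 : (A ∪ B).ncard ≤ ((B \ A) ∪ A).ncard := by
      apply Set.ncard_le_ncard _ (Set.toFinite _)
      intro x hx
      by_cases hxA : x ∈ A
      · exact Or.inr hxA
      · rcases hx with hx | hx
        · exact absurd hx hxA
        · exact Or.inl ⟨hx, hxA⟩
    have e3 : ((B \ A) ∪ A).ncard ≤ (B \ A).ncard + A.ncard := Set.ncard_union_le _ _
    have e4 := hmle v
    omega
  by_cases hbigA : n ≤ 2 * A.ncard
  · refine ⟨j, Gj.connectedComponentMk v, ?_, hbigA⟩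
    have h2a : 1 < A.ncard := by omega
    obtain ⟨x, hxA, hxv⟩ := Set.exists_ne_of_one_lt_ncard h2a v
    obtain ⟨p⟩ := (ConnectedComponent.exact ((hmemA x).1 hxA)).symm
    have hnn : ¬ p.Nil := p.not_nil_of_ne (Ne.symm hxv)
    exact ⟨v, p.getVert 1, Walk.adj_snd hnn, rfl⟩
  by_cases hbigB : n ≤ 2 * B.ncard
  · refine ⟨k, Gk.connectedComponentMk v, ?_, hbigB⟩
    have h2b : 1 < B.ncard := by omega
    obtain ⟨x, hxB, hxv⟩ := Set.exists_ne_of_one_lt_ncard h2b v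
    obtain ⟨p⟩ := (ConnectedComponent.exact ((hmemB x).1 hxB)).symm
    have hnn : ¬ p.Nil := p.not_nil_of_ne (Ne.symm hxv)
    exact ⟨v, p.getVert 1, Walk.adj_snd hnn, rfl⟩
  -- main case
  push_neg at hbigA hbigB
  have hcol : ∀ x ∈ A \ B, ∀ w ∈ B \ A, G.Adj x w → c s(x, w) = i := by
    intro x hx w hw hadj
    rcases hcov (c s(x, w)) with h | h | h
    · exact h
    · exact absurd (stepA x w hx.1 ⟨hadj, h⟩) hw.2
    · exact absurd (stepB w x hw.1 ⟨hadj.symm, by rw [Sym2.eq_swap]; exact h⟩) hx.2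
  have hiadj : ∀ x ∈ A \ B, ∀ w ∈ B \ A, G.Adj x w → Gi.Adj x w :=
    fun x hx w hw hadj => ⟨hadj, hcol x hx w hw hadj⟩
  -- counting for vertices in A \ B
  have hcntA : ∀ x ∈ A \ B,
      (B \ A).ncard + d + 1 ≤ ((B \ A) ∩ G.neighborSet x).ncard + n := by
    intro x hx
    have hxn : x ∉ B \ A := fun h => h.2 hx.1
    have := count_nbrs G x (B \ A) hxn
    have := hmle x
    omega
  have hcntB : ∀ w ∈ B \ A,
      (A \ B).ncard + d + 1 ≤ ((A \ B) ∩ G.neighborSet w).ncard + n := by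
    intro w hw
    have hwn : w ∉ A \ B := fun h => h.2 hw.1
    have := count_nbrs G w (A \ B) hwn
    have := hmle w
    omega
  -- common colour-i neighbour for two vertices of A \ B
  have hsame : ∀ x ∈ A \ B, ∀ y ∈ A \ B,
      ∃ w ∈ B \ A, Gi.Adj x w ∧ Gi.Adj y w := by
    intro x hx y hy
    have hix := hcntA x hx
    have hiy := hcntA y hy
    have hun : (((B \ A) ∩ G.neighborSet x) ∪ ((B \ A) ∩ G.neighborSet y)).ncard
        ≤ (B \ A).ncard := by
      apply Set.ncard_le_ncard _ (Set.toFinite _)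
      intro z hz
      rcases hz with hz | hz <;> exact hz.1
    have hie := Set.ncard_inter_add_ncard_union ((B \ A) ∩ G.neighborSet x)
      ((B \ A) ∩ G.neighborSet y) (Set.toFinite _) (Set.toFinite _)
    have hpos : (((B \ A) ∩ G.neighborSet x) ∩ ((B \ A) ∩ G.neighborSet y)).ncard ≠ 0 := by
      omega
    obtain ⟨w, hw⟩ := Set.nonempty_of_ncard_ne_zero hpos
    refine ⟨w, hw.1.1, hiadj x hx w hw.1.1 hw.1.2, hiadj y hy w hw.1.1 hw.2.2⟩
  -- pick a base vertex
  have hsp : (A \ B).ncard ≠ 0 := by omega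
  obtain ⟨x₀, hx₀⟩ := Set.nonempty_of_ncard_ne_zero hsp
  refine ⟨i, Gi.connectedComponentMk x₀, ?_, ?_⟩
  · obtain ⟨w, hwBA, hxw, _⟩ := hsame x₀ hx₀ x₀ hx₀
    exact ⟨x₀, w, hxw, rfl⟩
  · have hsubK : (A \ B) ∪ (B \ A) ⊆ (Gi.connectedComponentMk x₀).supp := by
      intro y hy
      rw [ConnectedComponent.mem_supp_iff]
      have key : ∀ z ∈ A \ B, Gi.connectedComponentMk z = Gi.connectedComponentMk x₀ := by
        intro z hz
        obtain ⟨w, hwBA, hzw, hx₀w⟩ := hsame z hz x₀ hx₀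
        calc Gi.connectedComponentMk z = Gi.connectedComponentMk w :=
              ConnectedComponent.sound hzw.reachable
          _ = Gi.connectedComponentMk x₀ :=
              ConnectedComponent.sound hx₀w.symm.reachable
      rcases hy with hy | hy
      · exact key y hy
      · have hcy := hcntB y hy
        have hpos : ((A \ B) ∩ G.neighborSet y).ncard ≠ 0 := by omega
        obtain ⟨x, hxAB, hxN⟩ := Set.nonempty_of_ncard_ne_zero hpos
        have hadj : G.Adj x y := (G.adj_symm hxN)
        have hGi : Gi.Adj x y := hiadj x hxAB y hy hadj
        calc Gi.connectedComponentMk y = Gi.connectedComponentMk x :=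
              ConnectedComponent.sound hGi.symm.reachable
          _ = Gi.connectedComponentMk x₀ := key x hxAB
    have hle : ((A \ B) ∪ (B \ A)).ncard ≤ (Gi.connectedComponentMk x₀).supp.ncard :=
      Set.ncard_le_ncard hsubK (Set.toFinite _)
    have heq : ((A \ B) ∪ (B \ A)).ncard = (A \ B).ncard + (B \ A).ncard :=
      Set.ncard_union_eq disjoint_sdiff_sdiff (Set.toFinite _) (Set.toFinite _)
    omega
end

section
/- Let G be a simple graph on n vertices whose edges are 3-coloured with colours red, blue and green, such that every vertex of G is incident to edges of all three colours and no monochromatic component has order m with 2m ≥ n. Suppose G has exactly r red components, exactly b blue components and exactly g green components, and that there exist two distinct red components R₁ and R₂ with |R₁| + |R₂| < n/2. Then there exists a simple graph G' on n' vertices together with a 3-edge-colouring of G' such that G' has exactly r-1 red components, exactly b blue components and exactly g green components, δ(G')·n ≥ δ(G)·n', and no monochromatic component of G' has order m with 2m ≥ n'. -/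
open SimpleGraph

namespace Stmt14Aux

lemma colourSub_adj {V : Type*} {k : ℕ} (G : SimpleGraph V) (c : Sym2 V → Fin k) (i : Fin k)
    (x y : V) : (colourSub G c i).Adj x y ↔ G.Adj x y ∧ c s(x, y) = i := Iff.rfl

variable {n : ℕ}

/-- projection from the double to the base. -/
def pr (hn : 0 < n) (x : Fin (2 * n)) : Fin n := ⟨x.val % n, Nat.mod_lt _ hn⟩

/-- first copy embedding -/
def em0 (hn : 0 < n) (a : Fin n) : Fin (2 * n) := ⟨a.val, by have := a.isLt; omega⟩

/-- second copy embedding -/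
def em1 (hn : 0 < n) (a : Fin n) : Fin (2 * n) := ⟨a.val + n, by have := a.isLt; omega⟩

lemma pr_em0 (hn : 0 < n) (a : Fin n) : pr hn (em0 hn a) = a := by
  apply Fin.ext
  simp [pr, em0, Nat.mod_eq_of_lt a.isLt]

lemma pr_em1 (hn : 0 < n) (a : Fin n) : pr hn (em1 hn a) = a := by
  apply Fin.ext
  simp [pr, em1, Nat.add_mod_right, Nat.mod_eq_of_lt a.isLt]

lemma em0_inj (hn : 0 < n) : Function.Injective (em0 hn) := by
  intro a b h
  have h2 : (em0 hn a).val = (em0 hn b).val := congrArg Fin.val h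
  simp only [em0] at h2
  exact Fin.ext h2

lemma em1_inj (hn : 0 < n) : Function.Injective (em1 hn) := by
  intro a b h
  have := congrArg Fin.val h
  simp only [em1] at this
  exact Fin.ext (by omega)

lemma em1_ne_em0 (hn : 0 < n) (a b : Fin n) : em1 hn a ≠ em0 hn b := by
  intro h
  have := congrArg Fin.val h
  have hb := b.isLt
  simp only [em1, em0] at this
  omega

lemma fiber (hn : 0 < n) (x : Fin (2 * n)) :
    x = em0 hn (pr hn x) ∨ x = em1 hn (pr hn x) := by
  rcases lt_or_ge x.val n with h | h
  · left
    apply Fin.ext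
    simp [em0, pr, Nat.mod_eq_of_lt h]
  · right
    apply Fin.ext
    have hx := x.isLt
    have h1 : x.val % n = x.val - n := by
      rw [Nat.mod_eq_sub_mod h, Nat.mod_eq_of_lt (by omega)]
    simp [em1, pr, h1]
    omega

variable (hn : 0 < n) (G : SimpleGraph (Fin n)) (c : Sym2 (Fin n) → Fin 3) (u v : Fin n)

/-- The doubled graph with one extra edge between the first copies of `u` and `v`. -/
def Gb : SimpleGraph (Fin (2 * n)) where
  Adj x y := G.Adj (pr hn x) (pr hn y) ∨ (s(x, y) = s(em0 hn u, em0 hn v) ∧ x ≠ y)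
  symm := by
    constructor
    intro x y h
    rcases h with h | ⟨h, hne⟩
    · exact Or.inl h.symm
    · exact Or.inr ⟨by rwa [Sym2.eq_swap], hne.symm⟩
  loopless := by
    constructor
    intro x h
    rcases h with h | ⟨_, hne⟩
    · exact G.irrefl h
    · exact hne rfl

/-- The colouring of the doubled graph. -/
def cb : Sym2 (Fin (2 * n)) → Fin 3 := fun e =>
  if e = s(em0 hn u, em0 hn v) then 0 else c (e.map (pr hn))

lemma adj_nonsp {i : Fin 3} {x y : Fin (2 * n)}
    (h : s(x, y) ≠ s(em0 hn u, em0 hn v)) :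
    (colourSub (Gb hn G u v) (cb hn c u v) i).Adj x y ↔
      (colourSub G c i).Adj (pr hn x) (pr hn y) := by
  constructor
  · rintro ⟨hadj, hc⟩
    rcases hadj with hadj | ⟨hsp, _⟩
    · refine ⟨hadj, ?_⟩
      unfold cb at hc
      rw [if_neg h, Sym2.map_pair_eq] at hc
      exact hc
    · exact absurd hsp h
  · rintro ⟨hadj, hc⟩
    refine ⟨Or.inl hadj, ?_⟩
    unfold cb
    rw [if_neg h, Sym2.map_pair_eq]
    exact hc

lemma sp_colour {i : Fin 3} {x y : Fin (2 * n)}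
    (h : (colourSub (Gb hn G u v) (cb hn c u v) i).Adj x y)
    (hsp : s(x, y) = s(em0 hn u, em0 hn v)) : i = 0 := by
  have hc := h.2
  unfold cb at hc
  rw [if_pos hsp] at hc
  exact hc.symm

lemma adj_sp (huv : u ≠ v) :
    (colourSub (Gb hn G u v) (cb hn c u v) 0).Adj (em0 hn u) (em0 hn v) := by
  refine ⟨Or.inr ⟨rfl, fun h => huv (em0_inj hn h)⟩, ?_⟩
  unfold cb
  rw [if_pos rfl]

lemma ne_sp_of_em1_right (x : Fin (2 * n)) (a : Fin n) :
    s(x, em1 hn a) ≠ s(em0 hn u, em0 hn v) := by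
  intro h
  rw [Sym2.eq_iff] at h
  rcases h with ⟨_, h2⟩ | ⟨_, h2⟩
  · exact em1_ne_em0 hn a v h2
  · exact em1_ne_em0 hn a u h2

lemma ne_sp_of_em1_left (a : Fin n) (y : Fin (2 * n)) :
    s(em1 hn a, y) ≠ s(em0 hn u, em0 hn v) := by
  rw [Sym2.eq_swap]
  exact ne_sp_of_em1_right hn u v y a

/-- any copies of adjacent base vertices are reachable in the doubled graph -/
lemma copies_reach {i : Fin 3} {p q : Fin n} (h : (colourSub G c i).Adj p q)
    (x y : Fin (2 * n)) (hx : pr hn x = p) (hy : pr hn y = q) :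
    (colourSub (Gb hn G u v) (cb hn c u v) i).Reachable x y := by
  by_cases hsp : s(x, y) = s(em0 hn u, em0 hn v)
  · have e1 : (colourSub (Gb hn G u v) (cb hn c u v) i).Adj x (em1 hn q) := by
      rw [adj_nonsp hn G c u v (ne_sp_of_em1_right hn u v x q)]
      rw [hx, pr_em1]
      exact h
    have e2 : (colourSub (Gb hn G u v) (cb hn c u v) i).Adj (em1 hn q) (em1 hn p) := by
      rw [adj_nonsp hn G c u v (ne_sp_of_em1_left hn u v q (em1 hn p))]
      rw [pr_em1, pr_em1]
      exact h.symm
    have e3 : (colourSub (Gb hn G u v) (cb hn c u v) i).Adj (em1 hn p) y := by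
      rw [adj_nonsp hn G c u v (ne_sp_of_em1_left hn u v p y)]
      rw [pr_em1, hy]
      exact h
    exact e1.reachable.trans (e2.reachable.trans e3.reachable)
  · refine SimpleGraph.Adj.reachable ?_
    rw [adj_nonsp hn G c u v hsp, hx, hy]
    exact h

lemma copies_reach_self {i : Fin 3} {p q : Fin n} (h : (colourSub G c i).Adj p q)
    (x y : Fin (2 * n)) (hx : pr hn x = p) (hy : pr hn y = p) :
    (colourSub (Gb hn G u v) (cb hn c u v) i).Reachable x y :=
  (copies_reach hn G c u v h x (em1 hn q) hx (pr_em1 hn q)).trans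
    (copies_reach hn G c u v h y (em1 hn q) hy (pr_em1 hn q)).symm

/-- lifting walks: if the base endpoints are connected and have an edge, the copies are
connected in the doubled graph. -/
lemma lift_reach {i : Fin 3} {a b : Fin n} (w : (colourSub G c i).Walk a b)
    (ha : ∃ p, (colourSub G c i).Adj a p) (x y : Fin (2 * n))
    (hx : pr hn x = a) (hy : pr hn y = b) :
    (colourSub (Gb hn G u v) (cb hn c u v) i).Reachable x y := by
  induction w generalizing x y with
  | nil =>
    obtain ⟨p, hp⟩ := ha
    exact copies_reach_self hn G c u v hp x y hx hy
  | @cons a a' b hadj w ih =>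
    have r1 := copies_reach hn G c u v hadj x (em1 hn a') hx (pr_em1 hn a')
    have r2 := ih ⟨a, hadj.symm⟩ (em1 hn a') y (pr_em1 hn a') hy
    exact r1.trans r2

/-- graph hom from the doubled colour-`i` graph to the base one, for `i ≠ 0`. -/
def projHom {i : Fin 3} (hi : i ≠ 0) :
    colourSub (Gb hn G u v) (cb hn c u v) i →g colourSub G c i where
  toFun := pr hn
  map_rel' := by
    intro x y h
    by_cases hsp : s(x, y) = s(em0 hn u, em0 hn v)
    · exact absurd (sp_colour hn G c u v h hsp) hi
    · exact (adj_nonsp hn G c u v hsp).mp h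

/-- graph hom from the base red graph into the doubled red graph. -/
def embHom (hsep : ¬ (colourSub G c 0).Adj u v) :
    colourSub G c 0 →g colourSub (Gb hn G u v) (cb hn c u v) 0 where
  toFun := em0 hn
  map_rel' := by
    intro a b h
    have hsp : s(em0 hn a, em0 hn b) ≠ s(em0 hn u, em0 hn v) := by
      intro he
      rw [Sym2.eq_iff] at he
      rcases he with ⟨h1, h2⟩ | ⟨h1, h2⟩
      · rw [em0_inj hn h1, em0_inj hn h2] at h
        exact hsep h
      · rw [em0_inj hn h1, em0_inj hn h2] at h
        exact hsep h.symm
    rw [adj_nonsp hn G c u v hsp, pr_em0, pr_em0]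
    exact h

lemma projHom_apply {i : Fin 3} (hi : i ≠ 0) (x : Fin (2 * n)) :
    (projHom hn G c u v hi) x = pr hn x := rfl

lemma embHom_apply (hsep : ¬ (colourSub G c 0).Adj u v) (a : Fin n) :
    (embHom hn G c u v hsep) a = em0 hn a := rfl

/-- projecting red reachability: endpoints are in the same red component, or both
endpoints project into the two merged components. -/
lemma proj0 {x y : Fin (2 * n)}
    (h : (colourSub (Gb hn G u v) (cb hn c u v) 0).Reachable x y) :
    (colourSub G c 0).connectedComponentMk (pr hn x) =
        (colourSub G c 0).connectedComponentMk (pr hn y) ∨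
      (((colourSub G c 0).connectedComponentMk (pr hn x) =
          (colourSub G c 0).connectedComponentMk u ∨
        (colourSub G c 0).connectedComponentMk (pr hn x) =
          (colourSub G c 0).connectedComponentMk v) ∧
       ((colourSub G c 0).connectedComponentMk (pr hn y) =
          (colourSub G c 0).connectedComponentMk u ∨
        (colourSub G c 0).connectedComponentMk (pr hn y) =
          (colourSub G c 0).connectedComponentMk v)) := by
  obtain ⟨w⟩ := h
  induction w with
  | nil => exact Or.inl rfl
  | @cons x z y hadj w ih =>
    have hstep :
        (colourSub G c 0).connectedComponentMk (pr hn x) =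
            (colourSub G c 0).connectedComponentMk (pr hn z) ∨
          (((colourSub G c 0).connectedComponentMk (pr hn x) =
              (colourSub G c 0).connectedComponentMk u ∨
            (colourSub G c 0).connectedComponentMk (pr hn x) =
              (colourSub G c 0).connectedComponentMk v) ∧
           ((colourSub G c 0).connectedComponentMk (pr hn z) =
              (colourSub G c 0).connectedComponentMk u ∨
            (colourSub G c 0).connectedComponentMk (pr hn z) =
              (colourSub G c 0).connectedComponentMk v)) := by
      by_cases hsp : s(x, z) = s(em0 hn u, em0 hn v)
      · right
        rw [Sym2.eq_iff] at hsp
        rcases hsp with ⟨h1, h2⟩ | ⟨h1, h2⟩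
        · rw [h1, h2, pr_em0, pr_em0]
          exact ⟨Or.inl rfl, Or.inr rfl⟩
        · rw [h1, h2, pr_em0, pr_em0]
          exact ⟨Or.inr rfl, Or.inl rfl⟩
      · left
        exact ConnectedComponent.sound ((adj_nonsp hn G c u v hsp).mp hadj).reachable
    rcases hstep with h1 | ⟨h1a, h1b⟩
    · rcases ih with h2 | ⟨h2a, h2b⟩
      · exact Or.inl (h1.trans h2)
      · exact Or.inr ⟨by rw [h1]; exact h2a, h2b⟩
    · rcases ih with h2 | ⟨h2a, h2b⟩
      · exact Or.inr ⟨h1a, by rw [← h2]; exact h1b⟩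
      · exact Or.inr ⟨h1a, h2b⟩

/-- A set of doubles projecting into `T` has cardinality at most `2 * T.ncard`. -/
lemma double_card_bound (A : Set (Fin (2 * n))) (T : Set (Fin n))
    (hT : ∀ x ∈ A, pr hn x ∈ T) : A.ncard ≤ 2 * T.ncard := by
  have hsub : A ⊆ em0 hn '' T ∪ em1 hn '' T := by
    intro x hx
    rcases fiber hn x with h | h
    · exact Or.inl ⟨pr hn x, hT x hx, h.symm⟩
    · exact Or.inr ⟨pr hn x, hT x hx, h.symm⟩
  calc A.ncard ≤ (em0 hn '' T ∪ em1 hn '' T).ncard :=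
        Set.ncard_le_ncard hsub (Set.toFinite _)
    _ ≤ (em0 hn '' T).ncard + (em1 hn '' T).ncard := Set.ncard_union_le _ _
    _ = 2 * T.ncard := by
        rw [Set.ncard_image_of_injective _ (em0_inj hn),
          Set.ncard_image_of_injective _ (em1_inj hn)]
        omega


/-- Counting monochromatic components of non-red colours: unchanged. -/
lemma mono_count_ne0 {i : Fin 3} (hi : i ≠ 0) :
    {K' : (colourSub (Gb hn G u v) (cb hn c u v) i).ConnectedComponent |
        IsMonoComp (Gb hn G u v) (cb hn c u v) i K'}.ncard =
    {K : (colourSub G c i).ConnectedComponent | IsMonoComp G c i K}.ncard := by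
  set f := ConnectedComponent.map (projHom hn G c u v hi) with hf
  have hmaps : Set.MapsTo f
      {K' | IsMonoComp (Gb hn G u v) (cb hn c u v) i K'}
      {K | IsMonoComp G c i K} := by
    rintro K' ⟨x, y, hxy, hmk⟩
    have hnsp : s(x, y) ≠ s(em0 hn u, em0 hn v) :=
      fun h => hi (sp_colour hn G c u v hxy h)
    refine ⟨pr hn x, pr hn y, (adj_nonsp hn G c u v hnsp).mp hxy, ?_⟩
    rw [← hmk, hf]
    exact (ConnectedComponent.map_mk (projHom hn G c u v hi) x).symm
  have hinj : Set.InjOn f {K' | IsMonoComp (Gb hn G u v) (cb hn c u v) i K'} := by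
    rintro K' ⟨x, x', hx, hmkx⟩ L' ⟨y, y', hy, hmky⟩ hfeq
    have hnspx : s(x, x') ≠ s(em0 hn u, em0 hn v) :=
      fun h => hi (sp_colour hn G c u v hx h)
    have hx0 : (colourSub G c i).Adj (pr hn x) (pr hn x') :=
      (adj_nonsp hn G c u v hnspx).mp hx
    rw [← hmkx, ← hmky, hf, ConnectedComponent.map_mk, ConnectedComponent.map_mk] at hfeq
    simp only [projHom_apply] at hfeq
    obtain ⟨w⟩ := ConnectedComponent.exact hfeq
    have hreach := lift_reach hn G c u v w ⟨pr hn x', hx0⟩ x y rfl rfl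
    rw [← hmkx, ← hmky]
    exact ConnectedComponent.sound hreach
  have hsurj : Set.SurjOn f
      {K' | IsMonoComp (Gb hn G u v) (cb hn c u v) i K'}
      {K | IsMonoComp G c i K} := by
    rintro K ⟨a, a', hab, hmk⟩
    have hadj' : (colourSub (Gb hn G u v) (cb hn c u v) i).Adj (em1 hn a) (em1 hn a') := by
      rw [adj_nonsp hn G c u v (ne_sp_of_em1_left hn u v a (em1 hn a')), pr_em1, pr_em1]
      exact hab
    refine ⟨(colourSub (Gb hn G u v) (cb hn c u v) i).connectedComponentMk (em1 hn a),
      ⟨em1 hn a, em1 hn a', hadj', rfl⟩, ?_⟩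
    show f ((colourSub (Gb hn G u v) (cb hn c u v) i).connectedComponentMk (em1 hn a)) = K
    rw [hf, ConnectedComponent.map_mk]
    show (colourSub G c i).connectedComponentMk (pr hn (em1 hn a)) = K
    rw [pr_em1]
    exact hmk
  have himg := Set.BijOn.image_eq ⟨hmaps, hinj, hsurj⟩
  rw [← himg, Set.ncard_image_of_injOn hinj]

/-- Counting red components: the components of `u` and `v` are merged. -/
lemma mono_count_0 (huv : u ≠ v) (hsep : ¬ (colourSub G c 0).Adj u v)
    (w₁ w₂ : Fin n) (hu : (colourSub G c 0).Adj u w₁) (hv : (colourSub G c 0).Adj v w₂)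
    (hmkne : (colourSub G c 0).connectedComponentMk u ≠
      (colourSub G c 0).connectedComponentMk v) :
    {K' : (colourSub (Gb hn G u v) (cb hn c u v) 0).ConnectedComponent |
        IsMonoComp (Gb hn G u v) (cb hn c u v) 0 K'}.ncard =
    ({K : (colourSub G c 0).ConnectedComponent | IsMonoComp G c 0 K} \
      {(colourSub G c 0).connectedComponentMk v}).ncard := by
  set f := ConnectedComponent.map (embHom hn G c u v hsep) with hf
  set S := ({K : (colourSub G c 0).ConnectedComponent | IsMonoComp G c 0 K} \
      {(colourSub G c 0).connectedComponentMk v}) with hS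
  have huu : (colourSub G c 0).connectedComponentMk u ∈ S := by
    refine ⟨⟨u, w₁, hu, rfl⟩, ?_⟩
    simpa using hmkne
  have hsp01 : (colourSub (Gb hn G u v) (cb hn c u v) 0).connectedComponentMk (em0 hn u) =
      (colourSub (Gb hn G u v) (cb hn c u v) 0).connectedComponentMk (em0 hn v) :=
    ConnectedComponent.sound (adj_sp hn G c u v huv).reachable
  have hmaps : Set.MapsTo f S
      {K' | IsMonoComp (Gb hn G u v) (cb hn c u v) 0 K'} := by
    rintro K ⟨⟨a, a', hab, hmk⟩, _⟩
    refine ⟨em0 hn a, em0 hn a', (embHom hn G c u v hsep).map_adj hab, ?_⟩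
    rw [← hmk, hf]
    exact (ConnectedComponent.map_mk (embHom hn G c u v hsep) a).symm
  have hinj : Set.InjOn f S := by
    rintro K ⟨⟨a, a', ha, hmkA⟩, hKne⟩ L ⟨⟨b, b', hbb, hmkB⟩, hLne⟩ hfeq
    rw [← hmkA, ← hmkB, hf, ConnectedComponent.map_mk, ConnectedComponent.map_mk] at hfeq
    simp only [embHom_apply] at hfeq
    have hP := proj0 hn G c u v (ConnectedComponent.exact hfeq)
    rw [pr_em0, pr_em0] at hP
    rcases hP with h | ⟨hA, hB⟩
    · rw [← hmkA, ← hmkB, h]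
    · have hAu : (colourSub G c 0).connectedComponentMk a =
          (colourSub G c 0).connectedComponentMk u := by
        rcases hA with h | h
        · exact h
        · exact absurd (by simpa using (hmkA.symm.trans h)) hKne
      have hBu : (colourSub G c 0).connectedComponentMk b =
          (colourSub G c 0).connectedComponentMk u := by
        rcases hB with h | h
        · exact h
        · exact absurd (by simpa using (hmkB.symm.trans h)) hLne
      rw [← hmkA, ← hmkB, hAu, hBu]
  have hsurj : Set.SurjOn f S
      {K' | IsMonoComp (Gb hn G u v) (cb hn c u v) 0 K'} := by
    rintro K' ⟨x, y, hxy, hmk⟩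
    have hfu : f ((colourSub G c 0).connectedComponentMk u) =
        (colourSub (Gb hn G u v) (cb hn c u v) 0).connectedComponentMk (em0 hn u) := by
      rw [hf]; exact ConnectedComponent.map_mk _ u
    by_cases hsp : s(x, y) = s(em0 hn u, em0 hn v)
    · refine ⟨(colourSub G c 0).connectedComponentMk u, huu, ?_⟩
      rw [Sym2.eq_iff] at hsp
      rcases hsp with ⟨h1, _⟩ | ⟨h1, _⟩
      · rw [hfu, ← h1]; exact hmk
      · rw [hfu, hsp01, ← h1]; exact hmk
    · have hab : (colourSub G c 0).Adj (pr hn x) (pr hn y) :=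
        (adj_nonsp hn G c u v hsp).mp hxy
      have hxe : (colourSub (Gb hn G u v) (cb hn c u v) 0).connectedComponentMk x =
          (colourSub (Gb hn G u v) (cb hn c u v) 0).connectedComponentMk
            (em0 hn (pr hn x)) :=
        ConnectedComponent.sound
          (copies_reach_self hn G c u v hab x (em0 hn (pr hn x)) rfl (pr_em0 hn _))
      have hfx : f ((colourSub G c 0).connectedComponentMk (pr hn x)) = K' := by
        rw [hf, ConnectedComponent.map_mk]
        exact hxe.symm.trans hmk
      by_cases hK2 : (colourSub G c 0).connectedComponentMk (pr hn x) =
          (colourSub G c 0).connectedComponentMk v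
      · refine ⟨(colourSub G c 0).connectedComponentMk u, huu, ?_⟩
        have hfv : f ((colourSub G c 0).connectedComponentMk v) =
            (colourSub (Gb hn G u v) (cb hn c u v) 0).connectedComponentMk (em0 hn v) := by
          rw [hf]; exact ConnectedComponent.map_mk _ v
        rw [hfu, hsp01, ← hfv, ← hK2, hfx]
      · refine ⟨(colourSub G c 0).connectedComponentMk (pr hn x),
          ⟨⟨pr hn x, pr hn y, hab, rfl⟩, by simpa using hK2⟩, hfx⟩
  have himg := Set.BijOn.image_eq ⟨hmaps, hinj, hsurj⟩
  rw [← himg, Set.ncard_image_of_injOn hinj]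

/-- Size bound for non-red monochromatic components of the doubled graph. -/
lemma mono_size_ne0 {i : Fin 3} (hi : i ≠ 0)
    (hsm : ∀ K : (colourSub G c i).ConnectedComponent,
      IsMonoComp G c i K → 2 * K.supp.ncard < n)
    (K' : (colourSub (Gb hn G u v) (cb hn c u v) i).ConnectedComponent)
    (hK' : IsMonoComp (Gb hn G u v) (cb hn c u v) i K') :
    2 * K'.supp.ncard < 2 * n := by
  obtain ⟨x, y, hxy, hmk⟩ := hK'
  have hnsp : s(x, y) ≠ s(em0 hn u, em0 hn v) :=
    fun h => hi (sp_colour hn G c u v hxy h)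
  have hab : (colourSub G c i).Adj (pr hn x) (pr hn y) :=
    (adj_nonsp hn G c u v hnsp).mp hxy
  have hmono : IsMonoComp G c i ((colourSub G c i).connectedComponentMk (pr hn x)) :=
    ⟨pr hn x, pr hn y, hab, rfl⟩
  have hbd := hsm _ hmono
  have hbound : K'.supp.ncard ≤
      2 * ((colourSub G c i).connectedComponentMk (pr hn x)).supp.ncard := by
    apply double_card_bound hn
    intro z hz
    rw [ConnectedComponent.mem_supp_iff] at hz ⊢
    rw [← hmk] at hz
    obtain ⟨w⟩ := ConnectedComponent.exact hz
    exact ConnectedComponent.sound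
      (SimpleGraph.Reachable.map (projHom hn G c u v hi) ⟨w⟩)
  omega

/-- Size bound for red monochromatic components of the doubled graph. -/
lemma mono_size_0 (huv : u ≠ v)
    (hsm0 : ∀ K : (colourSub G c 0).ConnectedComponent,
      IsMonoComp G c 0 K → 2 * K.supp.ncard < n)
    (hsum' : 2 * (((colourSub G c 0).connectedComponentMk u).supp.ncard +
      ((colourSub G c 0).connectedComponentMk v).supp.ncard) < n)
    (K' : (colourSub (Gb hn G u v) (cb hn c u v) 0).ConnectedComponent)
    (hK' : IsMonoComp (Gb hn G u v) (cb hn c u v) 0 K') :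
    2 * K'.supp.ncard < 2 * n := by
  obtain ⟨x, y, hxy, hmk⟩ := hK'
  have key : ∀ z ∈ K'.supp,
      (colourSub G c 0).connectedComponentMk (pr hn z) =
          (colourSub G c 0).connectedComponentMk (pr hn x) ∨
        (((colourSub G c 0).connectedComponentMk (pr hn z) =
            (colourSub G c 0).connectedComponentMk u ∨
          (colourSub G c 0).connectedComponentMk (pr hn z) =
            (colourSub G c 0).connectedComponentMk v) ∧
         ((colourSub G c 0).connectedComponentMk (pr hn x) =
            (colourSub G c 0).connectedComponentMk u ∨
          (colourSub G c 0).connectedComponentMk (pr hn x) =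
            (colourSub G c 0).connectedComponentMk v)) := by
    intro z hz
    rw [ConnectedComponent.mem_supp_iff, ← hmk] at hz
    exact proj0 hn G c u v (ConnectedComponent.exact hz)
  by_cases hpair : (colourSub G c 0).connectedComponentMk (pr hn x) =
        (colourSub G c 0).connectedComponentMk u ∨
      (colourSub G c 0).connectedComponentMk (pr hn x) =
        (colourSub G c 0).connectedComponentMk v
  · have hbound : K'.supp.ncard ≤
        2 * (((colourSub G c 0).connectedComponentMk u).supp ∪
          ((colourSub G c 0).connectedComponentMk v).supp).ncard := by
      apply double_card_bound hn
      intro z hz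
      have hzz : (colourSub G c 0).connectedComponentMk (pr hn z) =
            (colourSub G c 0).connectedComponentMk u ∨
          (colourSub G c 0).connectedComponentMk (pr hn z) =
            (colourSub G c 0).connectedComponentMk v := by
        rcases key z hz with h | ⟨hA, _⟩
        · rcases hpair with hp | hp
          · exact Or.inl (h.trans hp)
          · exact Or.inr (h.trans hp)
        · exact hA
      rcases hzz with h | h
      · exact Or.inl (ConnectedComponent.mem_supp_iff _ _ |>.mpr h)
      · exact Or.inr (ConnectedComponent.mem_supp_iff _ _ |>.mpr h)
    have h2 := Set.ncard_union_le ((colourSub G c 0).connectedComponentMk u).supp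
      ((colourSub G c 0).connectedComponentMk v).supp
    omega
  · push_neg at hpair
    have hmono : IsMonoComp G c 0
        ((colourSub G c 0).connectedComponentMk (pr hn x)) := by
      by_cases hsp : s(x, y) = s(em0 hn u, em0 hn v)
      · exfalso
        rw [Sym2.eq_iff] at hsp
        rcases hsp with ⟨h1, _⟩ | ⟨h1, _⟩
        · exact hpair.1 (by rw [h1, pr_em0])
        · exact hpair.2 (by rw [h1, pr_em0])
      · exact ⟨pr hn x, pr hn y, (adj_nonsp hn G c u v hsp).mp hxy, rfl⟩
    have hbd := hsm0 _ hmono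
    have hbound : K'.supp.ncard ≤
        2 * ((colourSub G c 0).connectedComponentMk (pr hn x)).supp.ncard := by
      apply double_card_bound hn
      intro z hz
      rcases key z hz with h | ⟨_, hB⟩
      · exact (ConnectedComponent.mem_supp_iff _ _).mpr h
      · exact absurd hB (by push_neg; exact hpair)
    omega

/-- Degree bound for the doubled graph. -/
lemma degree_bound [DecidableRel G.Adj] [DecidableRel (Gb hn G u v).Adj]
    (x : Fin (2 * n)) : 2 * G.degree (pr hn x) ≤ (Gb hn G u v).degree x := by
  set S := G.neighborFinset (pr hn x) with hSdef
  have hsub : S.image (em0 hn) ∪ S.image (em1 hn) ⊆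
      (Gb hn G u v).neighborFinset x := by
    intro z hz
    rw [Finset.mem_union, Finset.mem_image, Finset.mem_image] at hz
    rw [SimpleGraph.mem_neighborFinset]
    rcases hz with ⟨w, hw, rfl⟩ | ⟨w, hw, rfl⟩
    · rw [hSdef, SimpleGraph.mem_neighborFinset] at hw
      exact Or.inl (by rw [pr_em0]; exact hw)
    · rw [hSdef, SimpleGraph.mem_neighborFinset] at hw
      exact Or.inl (by rw [pr_em1]; exact hw)
  have hdisj : Disjoint (S.image (em0 hn)) (S.image (em1 hn)) := by
    rw [Finset.disjoint_left]
    intro z hz0 hz1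
    rw [Finset.mem_image] at hz0 hz1
    obtain ⟨w, _, rfl⟩ := hz0
    obtain ⟨w', _, h⟩ := hz1
    exact em1_ne_em0 hn w' w h
  have h0 : (S.image (em0 hn)).card = S.card :=
    Finset.card_image_of_injective _ (em0_inj hn)
  have h1 : (S.image (em1 hn)).card = S.card :=
    Finset.card_image_of_injective _ (em1_inj hn)
  have hcu : (S.image (em0 hn) ∪ S.image (em1 hn)).card =
      (S.image (em0 hn)).card + (S.image (em1 hn)).card :=
    Finset.card_union_of_disjoint hdisj
  have hle := Finset.card_le_card hsub
  have hdeg1 : G.degree (pr hn x) = S.card := rfl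
  have hdeg2 : (Gb hn G u v).degree x = ((Gb hn G u v).neighborFinset x).card := rfl
  omega

/-- Minimum degree scaling. -/
lemma minDeg_scale : minDeg G * (2 * n) ≤ minDeg (Gb hn G u v) * n := by
  have key : ∀ (i1 : DecidableRel G.Adj) (i2 : DecidableRel (Gb hn G u v).Adj),
      2 * @SimpleGraph.minDegree _ G _ i1 ≤
        @SimpleGraph.minDegree _ (Gb hn G u v) _ i2 := by
    intro i1 i2
    haveI : Nonempty (Fin (2 * n)) := ⟨em0 hn ⟨0, hn⟩⟩
    apply SimpleGraph.le_minDegree_of_forall_le_degree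
    intro x
    have h1 := @SimpleGraph.minDegree_le_degree _ G _ i1 (pr hn x)
    have h2 := @degree_bound n hn G u v i1 i2 x
    omega
  have key2 : 2 * minDeg G ≤ minDeg (Gb hn G u v) := by
    unfold minDeg
    exact key _ _
  calc minDeg G * (2 * n) = 2 * minDeg G * n := by ring
    _ ≤ minDeg (Gb hn G u v) * n := Nat.mul_le_mul_right _ key2

end Stmt14Aux

open Stmt14Aux in
/-- If the edges of G are 3-coloured (red = 0, blue = 1, green = 2) so that every vertex is
incident to all three colours, no monochromatic component has order m with 2m ≥ n, G has
exactly r red, b blue and g green components, and there are distinct red components R₁, R₂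
with |R₁| + |R₂| < n/2, then there exists a 3-edge-coloured graph G' on n' vertices with
exactly r-1 red, b blue and g green components, δ(G')/n' ≥ δ(G)/n, and no monochromatic
component of G' of order m with 2m ≥ n'. -/
theorem stmt_14 (n : ℕ) (G : SimpleGraph (Fin n)) (c : Sym2 (Fin n) → Fin 3)
    (r b g : ℕ)
    (hall : ∀ v, ∀ i : Fin 3, ∃ u, G.Adj v u ∧ c s(v, u) = i)
    (hsmall : ∀ (i : Fin 3) (K : (colourSub G c i).ConnectedComponent),
      IsMonoComp G c i K → 2 * K.supp.ncard < n)
    (hr : {K : (colourSub G c 0).ConnectedComponent | IsMonoComp G c 0 K}.ncard = r)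
    (hb : {K : (colourSub G c 1).ConnectedComponent | IsMonoComp G c 1 K}.ncard = b)
    (hg : {K : (colourSub G c 2).ConnectedComponent | IsMonoComp G c 2 K}.ncard = g)
    (K₁ K₂ : (colourSub G c 0).ConnectedComponent) (hK : K₁ ≠ K₂)
    (hK₁ : IsMonoComp G c 0 K₁) (hK₂ : IsMonoComp G c 0 K₂)
    (hsum : 2 * (K₁.supp.ncard + K₂.supp.ncard) < n) :
    ∃ (n' : ℕ) (G' : SimpleGraph (Fin n')) (c' : Sym2 (Fin n') → Fin 3),
      {K : (colourSub G' c' 0).ConnectedComponent | IsMonoComp G' c' 0 K}.ncard = r - 1 ∧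
      {K : (colourSub G' c' 1).ConnectedComponent | IsMonoComp G' c' 1 K}.ncard = b ∧
      {K : (colourSub G' c' 2).ConnectedComponent | IsMonoComp G' c' 2 K}.ncard = g ∧
      minDeg G * n' ≤ minDeg G' * n ∧
      ∀ (i : Fin 3) (K : (colourSub G' c' i).ConnectedComponent),
        IsMonoComp G' c' i K → 2 * K.supp.ncard < n' := by
  classical
  obtain ⟨u, w₁, huw, hmku⟩ := hK₁
  obtain ⟨v, w₂, hvw, hmkv⟩ := hK₂
  have hn : 0 < n := u.pos
  have huv : u ≠ v := by
    intro h
    exact hK (by rw [← hmku, ← hmkv, h])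
  have hsep : ¬ (colourSub G c 0).Adj u v := by
    intro h
    exact hK (by rw [← hmku, ← hmkv]; exact ConnectedComponent.sound h.reachable)
  have hmkne : (colourSub G c 0).connectedComponentMk u ≠
      (colourSub G c 0).connectedComponentMk v := by
    rw [hmku, hmkv]; exact hK
  refine ⟨2 * n, Gb hn G u v, cb hn c u v, ?_, ?_, ?_, ?_, ?_⟩
  · rw [mono_count_0 hn G c u v huv hsep w₁ w₂ huw hvw hmkne, hmkv]
    rw [Set.ncard_diff_singleton_of_mem (show K₂ ∈ {K | IsMonoComp G c 0 K} from
      ⟨v, w₂, hvw, hmkv⟩), hr]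
  · exact (mono_count_ne0 hn G c u v (by decide)).trans hb
  · exact (mono_count_ne0 hn G c u v (by decide)).trans hg
  · exact minDeg_scale hn G u v
  · intro i K hK
    by_cases hi : i = 0
    · subst hi
      refine mono_size_0 hn G c u v huv (fun K hK => hsmall 0 K hK) ?_ K hK
      rw [hmku, hmkv]
      exact hsum
    · exact mono_size_ne0 hn G c u v hi (fun K hK => hsmall i K hK) K hK
end

section
/- Let q ≥ 3 be an integer and n = 6q. Then there exists a simple graph G on n vertices with minimum degree δ(G) = 5q - 2 together with a 3-edge-colouring of G such that every monochromatic component has order at most 3q - 1 (in particular strictly less than n/2). -/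
open SimpleGraph

/-! ### The construction

Vertices `Fin (6*q)` are split into six parts: parts 0,1,2 of size `q+1` and
parts 3,4,5 of size `q-1`.  The pattern graph on parts is `K₆` minus the perfect
matching 03, 14, 25 (with the diagonal present, giving cliques inside parts).
Edges between parts `i`,`j` get colour `M i j`; each colour class on parts has
components {0,1},{2,3,4} / {0,2},{1,3,5} / {1,2},{0,4,5}, each with at most
`3q-1` vertices. -/

/-- which of the six parts a vertex index belongs to -/
def pt (q n : ℕ) : Fin 6 :=
  if n < q + 1 then 0 else if n < 2*q+2 then 1 else if n < 3*q+3 then 2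
  else if n < 4*q+2 then 3 else if n < 5*q+1 then 4 else 5

/-- the pattern: K6 minus the perfect matching 03, 14, 25; true on the diagonal -/
def pat : Fin 6 → Fin 6 → Bool :=
  ![![true,true,true,false,true,true],
    ![true,true,true,true,false,true],
    ![true,true,true,true,true,false],
    ![false,true,true,true,true,true],
    ![true,false,true,true,true,true],
    ![true,true,false,true,true,true]]

/-- the colour table (symmetric) -/
def M : Fin 6 → Fin 6 → Fin 3 :=
  ![![0,0,1,0,2,2], ![0,0,2,1,0,1], ![1,2,0,0,0,0],
    ![0,1,0,0,0,1], ![2,0,0,0,0,2], ![2,1,0,1,2,0]]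

/-- grouping of parts by colour: parts joined by colour-c edges get the same group -/
def gg : Fin 3 → Fin 6 → Fin 6 :=
  ![![0,0,2,2,2,5], ![0,1,0,1,4,1], ![0,1,1,3,0,0]]

lemma cons_val_five {α : Type*} {m : ℕ} (x : α) (u : Fin (m+5) → α) :
    Matrix.vecCons x u 5 = u 4 := rfl

lemma pat_symm (i j : Fin 6) : pat i j = pat j i := by revert i j; decide

lemma pat_refl (i : Fin 6) : pat i i = true := by revert i; decide

lemma M_symm (i j : Fin 6) : M i j = M j i := by revert i j; decide

lemma key (a b : Fin 6) : pat a b = true → gg (M a b) a = gg (M a b) b := by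
  revert a b; decide

lemma pt_cases (q n : ℕ) (hq : 3 ≤ q) (hn : n < 6*q) :
    (pt q n = 0 ∧ n < q+1) ∨ (pt q n = 1 ∧ q+1 ≤ n ∧ n < 2*q+2) ∨
    (pt q n = 2 ∧ 2*q+2 ≤ n ∧ n < 3*q+3) ∨ (pt q n = 3 ∧ 3*q+3 ≤ n ∧ n < 4*q+2) ∨
    (pt q n = 4 ∧ 4*q+2 ≤ n ∧ n < 5*q+1) ∨ (pt q n = 5 ∧ 5*q+1 ≤ n ∧ n < 6*q) := by
  unfold pt
  split_ifs with h1 h2 h3 h4 h5 <;> simp <;> omega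

/-- generic counting lemma: counting vertices whose part satisfies `P` -/
lemma count_P (q : ℕ) (hq : 3 ≤ q) (P : Fin 6 → Bool) :
    (Finset.univ.filter fun u : Fin (6*q) => P (pt q u.val) = true).card
    = (if P 0 then q+1 else 0) + (if P 1 then q+1 else 0) + (if P 2 then q+1 else 0)
    + (if P 3 then q-1 else 0) + (if P 4 then q-1 else 0) + (if P 5 then q-1 else 0) := by
  rw [Finset.card_filter]
  rw [Fin.sum_univ_eq_sum_range (fun n => if P (pt q n) = true then 1 else 0) (6*q)]
  rw [Finset.range_eq_Ico]
  rw [← Finset.sum_Ico_consecutive _ (show 0 ≤ 5*q+1 by omega) (show 5*q+1 ≤ 6*q by omega)]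
  rw [← Finset.sum_Ico_consecutive _ (show 0 ≤ 4*q+2 by omega) (show 4*q+2 ≤ 5*q+1 by omega)]
  rw [← Finset.sum_Ico_consecutive _ (show 0 ≤ 3*q+3 by omega) (show 3*q+3 ≤ 4*q+2 by omega)]
  rw [← Finset.sum_Ico_consecutive _ (show 0 ≤ 2*q+2 by omega) (show 2*q+2 ≤ 3*q+3 by omega)]
  rw [← Finset.sum_Ico_consecutive _ (show 0 ≤ q+1 by omega) (show q+1 ≤ 2*q+2 by omega)]
  have piece : ∀ (a b : ℕ) (j : Fin 6), (∀ n, a ≤ n → n < b → pt q n = j) →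
      (∑ n ∈ Finset.Ico a b, if P (pt q n) = true then 1 else 0)
        = if P j then b - a else 0 := by
    intro a b j hj
    have hc : (∑ n ∈ Finset.Ico a b, if P (pt q n) = true then 1 else 0)
        = ∑ _n ∈ Finset.Ico a b, if P j = true then 1 else 0 :=
      Finset.sum_congr rfl (fun n hn => by
        rw [Finset.mem_Ico] at hn
        rw [hj n hn.1 hn.2])
    rw [hc, Finset.sum_const, Nat.card_Ico]
    split_ifs <;> simp
  have e0 := piece 0 (q+1) 0 (fun n h1 h2 => by
    rcases pt_cases q n hq (by omega) with ⟨h,hh⟩|⟨h,hh⟩|⟨h,hh⟩|⟨h,hh⟩|⟨h,hh⟩|⟨h,hh⟩ <;>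
      first | exact h | omega)
  have e1 := piece (q+1) (2*q+2) 1 (fun n h1 h2 => by
    rcases pt_cases q n hq (by omega) with ⟨h,hh⟩|⟨h,hh⟩|⟨h,hh⟩|⟨h,hh⟩|⟨h,hh⟩|⟨h,hh⟩ <;>
      first | exact h | omega)
  have e2 := piece (2*q+2) (3*q+3) 2 (fun n h1 h2 => by
    rcases pt_cases q n hq (by omega) with ⟨h,hh⟩|⟨h,hh⟩|⟨h,hh⟩|⟨h,hh⟩|⟨h,hh⟩|⟨h,hh⟩ <;>
      first | exact h | omega)
  have e3 := piece (3*q+3) (4*q+2) 3 (fun n h1 h2 => by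
    rcases pt_cases q n hq (by omega) with ⟨h,hh⟩|⟨h,hh⟩|⟨h,hh⟩|⟨h,hh⟩|⟨h,hh⟩|⟨h,hh⟩ <;>
      first | exact h | omega)
  have e4 := piece (4*q+2) (5*q+1) 4 (fun n h1 h2 => by
    rcases pt_cases q n hq (by omega) with ⟨h,hh⟩|⟨h,hh⟩|⟨h,hh⟩|⟨h,hh⟩|⟨h,hh⟩|⟨h,hh⟩ <;>
      first | exact h | omega)
  have e5 := piece (5*q+1) (6*q) 5 (fun n h1 h2 => by
    rcases pt_cases q n hq (by omega) with ⟨h,hh⟩|⟨h,hh⟩|⟨h,hh⟩|⟨h,hh⟩|⟨h,hh⟩|⟨h,hh⟩ <;>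
      first | exact h | omega)
  rw [e0, e1, e2, e3, e4, e5]
  split_ifs <;> omega

/-- the graph -/
def myG (q : ℕ) : SimpleGraph (Fin (6*q)) where
  Adj u v := u ≠ v ∧ pat (pt q u.val) (pt q v.val) = true
  symm := by
    constructor
    intro u v ⟨h1, h2⟩
    exact ⟨h1.symm, by rw [pat_symm]; exact h2⟩
  loopless := by constructor; intro u ⟨h, _⟩; exact h rfl

/-- the colouring -/
def myc (q : ℕ) : Sym2 (Fin (6*q)) → Fin 3 :=
  Sym2.lift ⟨fun u v => M (pt q u.val) (pt q v.val), fun u v => M_symm _ _⟩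

lemma deg_eq (q : ℕ) (hq : 3 ≤ q) (v : Fin (6*q)) (F : Fintype ((myG q).neighborSet v)) :
    @SimpleGraph.degree _ (myG q) v F
      = if (pt q v.val).val < 3 then 5*q else 5*q - 2 := by
  rw [← SimpleGraph.card_neighborSet_eq_degree]
  rw [Fintype.card_of_finset' ((Finset.univ.filter fun u : Fin (6*q) =>
        pat (pt q u.val) (pt q v.val) = true).erase v) (fun x => by
    simp only [Finset.mem_erase, Finset.mem_filter, Finset.mem_univ, true_and,
      SimpleGraph.mem_neighborSet]
    constructor
    · rintro ⟨h1, h2⟩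
      exact ⟨Ne.symm h1, by rw [pat_symm]; exact h2⟩
    · rintro ⟨h1, h2⟩
      exact ⟨Ne.symm h1, by rw [pat_symm]; exact h2⟩)]
  rw [Finset.card_erase_of_mem (by
    simp only [Finset.mem_filter, Finset.mem_univ, true_and]
    exact pat_refl _)]
  rw [count_P q hq (fun j => pat j (pt q v.val))]
  generalize pt q v.val = i
  fin_cases i <;>
    simp [pat, Matrix.cons_val_zero, Matrix.cons_val_one, Matrix.cons_val_two,
      Matrix.cons_val_three, Matrix.cons_val_four, cons_val_five, Matrix.head_cons,
      Matrix.vecHead, Matrix.vecTail] <;> omega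

lemma reach_group (q : ℕ) (i : Fin 3) {u v : Fin (6*q)}
    (h : (colourSub (myG q) (myc q) i).Reachable u v) :
    gg i (pt q u.val) = gg i (pt q v.val) := by
  obtain ⟨w⟩ := h
  induction w with
  | nil => rfl
  | cons h p ih =>
    refine Eq.trans ?_ ih
    obtain ⟨⟨hne, hpat⟩, hcol⟩ := h
    simp only [myc, Sym2.lift_mk] at hcol
    rw [← hcol]
    exact key _ _ hpat

lemma group_card (q : ℕ) (hq : 3 ≤ q) (i : Fin 3) (t : Fin 6) :
    (Finset.univ.filter fun v : Fin (6*q) =>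
      (decide (gg i (pt q v.val) = t)) = true).card ≤ 3*q - 1 := by
  rw [count_P q hq (fun j => decide (gg i j = t))]
  fin_cases i <;> fin_cases t <;>
    simp [gg, Matrix.cons_val_zero, Matrix.cons_val_one, Matrix.cons_val_two,
      Matrix.cons_val_three, Matrix.cons_val_four, cons_val_five, Matrix.head_cons,
      Matrix.vecHead, Matrix.vecTail] <;> omega

/-- For q ≥ 3 and n = 6q, there is a graph G on n vertices with δ(G) = 5q - 2 and a
3-edge-colouring in which every monochromatic component has order at most 3q - 1. -/
theorem stmt_18 (q : ℕ) (hq : 3 ≤ q) :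
    ∃ (G : SimpleGraph (Fin (6 * q))) (c : Sym2 (Fin (6 * q)) → Fin 3),
      minDeg G = 5 * q - 2 ∧
      ∀ (i : Fin 3) (K : (colourSub G c i).ConnectedComponent),
        IsMonoComp G c i K → K.supp.ncard ≤ 3 * q - 1 := by
  refine ⟨myG q, myc q, ?_, ?_⟩
  · unfold minDeg
    haveI : Nonempty (Fin (6*q)) := ⟨⟨0, by omega⟩⟩
    have hv0 : pt q (3*q+3) = 3 := by
      rcases pt_cases q (3*q+3) hq (by omega) with
        ⟨h,hh⟩|⟨h,hh⟩|⟨h,hh⟩|⟨h,hh⟩|⟨h,hh⟩|⟨h,hh⟩ <;> first | exact h | omega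
    apply le_antisymm
    · have h1 := @SimpleGraph.minDegree_le_degree _ (myG q) _ (Classical.decRel _)
        ⟨3*q+3, by omega⟩
      rw [deg_eq q hq ⟨3*q+3, by omega⟩ _] at h1
      simpa [hv0] using h1
    · letI : DecidableRel (myG q).Adj := Classical.decRel _
      apply SimpleGraph.le_minDegree_of_forall_le_degree
      intro v
      rw [deg_eq q hq v _]
      split_ifs <;> omega
  · intro i K hK
    obtain ⟨u, v, hadj, hmk⟩ := hK
    have hsub : K.supp ⊆ {w : Fin (6*q) | gg i (pt q w.val) = gg i (pt q u.val)} := by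
      intro w hw
      rw [SimpleGraph.ConnectedComponent.mem_supp_iff, ← hmk] at hw
      exact reach_group q i (SimpleGraph.ConnectedComponent.exact hw)
    refine le_trans (Set.ncard_le_ncard hsub (Set.toFinite _)) ?_
    rw [show {w : Fin (6*q) | gg i (pt q w.val) = gg i (pt q u.val)}
        = ↑(Finset.univ.filter fun w : Fin (6*q) =>
            (decide (gg i (pt q w.val) = gg i (pt q u.val))) = true) from by
      ext w; simp]
    rw [Set.ncard_coe_finset]
    exact group_card q hq i _
end
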